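/- Online performance bound in dynamics-KL form (Theorem 3 via the representation–dynamics equivalence): let P_src and P_tar be two transition kernels on the same finite state and action spaces (same reward, discount, and initial distribution), and assume P_tar(s,a)(s') > 0 for all (s,a,s'). Then for any policy π, J[P_tar](π) − J[P_src](π) ≥ −(√2·γ·r_max/(1−γ)²) · Σ_{(s,a)} ρ[P_src,π](s,a) · √( D_KL( P_src(s,a) ‖ P_tar(s,a) ) ). -/

import Mathlib

set_option maxHeartbeats 2000000


open Real

noncomputable section

variable {S A : Type*} [Fintype S] [Fintype A]

/-- Time-`t` state-action distribution `d_t[P,pol]` started from the initial state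
distribution `ρ0`:  `d_0(s,a) = ρ0(s)·pol(s)(a)` and
`d_{t+1}(s',a') = Σ_{(s,a)} d_t(s,a)·P(s,a)(s')·pol(s')(a')`. -/
def dDist (P : S → A → PMF S) (pol : S → PMF A) (ρ0 : PMF S) : ℕ → S × A → ℝ
  | 0 => fun p => (ρ0 p.1).toReal * (pol p.1 p.2).toReal
  | (t + 1) => fun p' =>
      ∑ p : S × A, dDist P pol ρ0 t p * (P p.1 p.2 p'.1).toReal * (pol p'.1 p'.2).toReal

/-- Normalized state-action occupancy `ρ[P,pol](s,a) = (1−γ)·Σ_t γ^t·d_t[P,pol](s,a)`. -/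
def occ (P : S → A → PMF S) (pol : S → PMF A) (ρ0 : PMF S) (γ : ℝ) (p : S × A) : ℝ :=
  (1 - γ) * ∑' t : ℕ, γ ^ t * dDist P pol ρ0 t p

/-- Normalized state occupancy `ν[P,pol](s) = Σ_a ρ[P,pol](s,a)`. -/
def stateOcc (P : S → A → PMF S) (pol : S → PMF A) (ρ0 : PMF S) (γ : ℝ) (s : S) : ℝ :=
  ∑ a : A, occ P pol ρ0 γ (s, a)

/-- Expected discounted return `J[P](pol) = Σ_t γ^t Σ_{(s,a)} d_t[P,pol](s,a)·r(s,a)`. -/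
def Jret (P : S → A → PMF S) (pol : S → PMF A) (ρ0 : PMF S) (r : S → A → ℝ) (γ : ℝ) : ℝ :=
  ∑' t : ℕ, γ ^ t * ∑ p : S × A, dDist P pol ρ0 t p * r p.1 p.2

/-- Value function `V[P,pol](s)`: the return with the recursion started from the point
distribution at `s` (i.e. `d_0(s',a) = 1[s'=s]·pol(s')(a)`). -/
def Vval (P : S → A → PMF S) (pol : S → PMF A) (r : S → A → ℝ) (γ : ℝ) (s : S) : ℝ :=
  Jret P pol (PMF.pure s) r γ

/-- Action-value function `Q[P,pol](s,a) = r(s,a) + γ·Σ_{s'} P(s,a)(s')·V[P,pol](s')`. -/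
def Qval (P : S → A → PMF S) (pol : S → PMF A) (r : S → A → ℝ) (γ : ℝ) (s : S) (a : A) : ℝ :=
  r s a + γ * ∑ s' : S, (P s a s').toReal * Vval P pol r γ s'

/-- Total variation distance between two pmfs on a finite type:
`D_TV(p,q) = (1/2)·Σ_x |p(x) − q(x)|`. -/
def dTV {X : Type*} [Fintype X] (p q : PMF X) : ℝ :=
  (1 / 2) * ∑ x : X, |(p x).toReal - (q x).toReal|

/-- Kullback–Leibler divergence between two pmfs on a finite type (with `q` everywhere
positive): `D_KL(p‖q) = Σ_x p(x)·log(p(x)/q(x))`, with the convention `0·log 0 = 0`. -/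
def dKL {X : Type*} [Fintype X] (p q : PMF X) : ℝ :=
  ∑ x : X, (p x).toReal * Real.log ((p x).toReal / (q x).toReal)

/-- Shannon entropy of a pmf on a finite type, `H(p) = −Σ_x p(x)·log p(x)`,
with the convention `0·log 0 = 0`. -/
def entropyPMF {X : Type*} [Fintype X] (p : PMF X) : ℝ :=
  - ∑ x : X, (p x).toReal * Real.log (p x).toReal

end


section AuxMDP

variable {S A : Type*} [Fintype S] [Fintype A]

lemma pmf_sum_toReal {X : Type*} [Fintype X] (p : PMF X) : ∑ x : X, (p x).toReal = 1 := by
  have h := p.tsum_coe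
  rw [tsum_fintype] at h
  rw [← ENNReal.toReal_sum (fun x _ => PMF.apply_ne_top p x), h, ENNReal.toReal_one]


lemma dDist_nonneg (P : S → A → PMF S) (pol : S → PMF A) (ρ0 : PMF S) :
    ∀ t p, 0 ≤ dDist P pol ρ0 t p := by
  intro t
  induction t with
  | zero => intro p; exact mul_nonneg ENNReal.toReal_nonneg ENNReal.toReal_nonneg
  | succ t ih =>
    intro p'
    exact Finset.sum_nonneg fun p _ =>
      mul_nonneg (mul_nonneg (ih p) ENNReal.toReal_nonneg) ENNReal.toReal_nonneg


lemma dDist_sum_one (P : S → A → PMF S) (pol : S → PMF A) (ρ0 : PMF S) :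
    ∀ t, ∑ p : S × A, dDist P pol ρ0 t p = 1 := by
  intro t
  induction t with
  | zero =>
    simp only [dDist]
    rw [Fintype.sum_prod_type]
    calc ∑ s : S, ∑ a : A, (ρ0 s).toReal * (pol s a).toReal
        = ∑ s : S, (ρ0 s).toReal * ∑ a : A, (pol s a).toReal := by
          simp [Finset.mul_sum]
      _ = 1 := by simp [pmf_sum_toReal]
  | succ t ih =>
    simp only [dDist]
    rw [Finset.sum_comm]
    calc ∑ p : S × A, ∑ p' : S × A, dDist P pol ρ0 t p * (P p.1 p.2 p'.1).toReal * (pol p'.1 p'.2).toReal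
        = ∑ p : S × A, dDist P pol ρ0 t p := by
          refine Finset.sum_congr rfl fun p _ => ?_
          rw [Fintype.sum_prod_type]
          calc ∑ s' : S, ∑ a' : A, dDist P pol ρ0 t p * (P p.1 p.2 s').toReal * (pol s' a').toReal
              = ∑ s' : S, dDist P pol ρ0 t p * (P p.1 p.2 s').toReal := by
                refine Finset.sum_congr rfl fun s' _ => ?_
                rw [← Finset.mul_sum, pmf_sum_toReal, mul_one]
            _ = dDist P pol ρ0 t p := by
                rw [← Finset.mul_sum, pmf_sum_toReal, mul_one]
      _ = 1 := ih

lemma dDist_mix (P : S → A → PMF S) (pol : S → PMF A) (ρ0 : PMF S) :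
    ∀ t p, dDist P pol ρ0 t p = ∑ s : S, (ρ0 s).toReal * dDist P pol (PMF.pure s) t p := by
  intro t
  induction t with
  | zero =>
    intro p
    simp only [dDist, PMF.pure_apply]
    rw [Finset.sum_eq_single p.1]
    · simp
    · intro b _ hb
      simp [Ne.symm hb]
    · simp
  | succ t ih =>
    intro p'
    simp only [dDist]
    calc ∑ p : S × A, dDist P pol ρ0 t p * (P p.1 p.2 p'.1).toReal * (pol p'.1 p'.2).toReal
        = ∑ p : S × A, ∑ s : S, (ρ0 s).toReal *
            (dDist P pol (PMF.pure s) t p * (P p.1 p.2 p'.1).toReal * (pol p'.1 p'.2).toReal) := by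
          refine Finset.sum_congr rfl fun p _ => ?_
          rw [ih p, Finset.sum_mul, Finset.sum_mul]
          refine Finset.sum_congr rfl fun s _ => by ring
      _ = ∑ s : S, (ρ0 s).toReal *
            ∑ p : S × A, dDist P pol (PMF.pure s) t p * (P p.1 p.2 p'.1).toReal * (pol p'.1 p'.2).toReal := by
          rw [Finset.sum_comm]
          exact Finset.sum_congr rfl fun s _ => by rw [Finset.mul_sum]


lemma dDist_succ_mix (P : S → A → PMF S) (pol : S → PMF A) (ρ0 : PMF S) :
    ∀ t p', dDist P pol ρ0 (t + 1) p' = ∑ s : S, ∑ a : A, (ρ0 s).toReal * (pol s a).toReal *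
      ∑ s' : S, (P s a s').toReal * dDist P pol (PMF.pure s') t p' := by
  intro t
  induction t with
  | zero =>
    intro p'
    simp only [dDist, PMF.pure_apply]
    rw [Fintype.sum_prod_type]
    refine Finset.sum_congr rfl fun s _ => Finset.sum_congr rfl fun a _ => ?_
    rw [Finset.mul_sum]
    rw [Finset.sum_eq_single p'.1]
    · simp; ring
    · intro b _ hb
      simp [Ne.symm hb]
    · simp
  | succ t ih =>
    intro p'
    calc dDist P pol ρ0 (t + 1 + 1) p'
        = ∑ p : S × A, dDist P pol ρ0 (t+1) p * (P p.1 p.2 p'.1).toReal * (pol p'.1 p'.2).toReal := rfl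
      _ = ∑ p : S × A, ∑ s : S, ∑ a : A, (ρ0 s).toReal * (pol s a).toReal *
            ∑ s' : S, (P s a s').toReal *
              (dDist P pol (PMF.pure s') t p * (P p.1 p.2 p'.1).toReal * (pol p'.1 p'.2).toReal) := by
          refine Finset.sum_congr rfl fun p _ => ?_
          rw [ih p, Finset.sum_mul, Finset.sum_mul]
          refine Finset.sum_congr rfl fun s _ => ?_
          rw [Finset.sum_mul, Finset.sum_mul]
          refine Finset.sum_congr rfl fun a _ => ?_
          simp only [Finset.sum_mul, Finset.mul_sum]
          refine Finset.sum_congr rfl fun s' _ => by ring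
      _ = ∑ s : S, ∑ a : A, (ρ0 s).toReal * (pol s a).toReal *
            ∑ s' : S, (P s a s').toReal * dDist P pol (PMF.pure s') (t+1) p' := by
          rw [Finset.sum_comm]
          refine Finset.sum_congr rfl fun s _ => ?_
          rw [Finset.sum_comm]
          refine Finset.sum_congr rfl fun a _ => ?_
          simp only [dDist, Finset.mul_sum]
          rw [Finset.sum_comm]

lemma bounded_summable {γ : ℝ} (hγ0 : 0 ≤ γ) (hγ1 : γ < 1) {c : ℕ → ℝ} {C : ℝ}
    (h : ∀ t, |c t| ≤ C) : Summable (fun t => γ ^ t * c t) := by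
  refine Summable.of_norm_bounded
    ((summable_geometric_of_lt_one hγ0 hγ1).mul_left C) fun t => ?_
  rw [norm_mul, norm_pow, Real.norm_eq_abs, Real.norm_eq_abs, abs_of_nonneg hγ0, mul_comm]
  exact mul_le_mul_of_nonneg_right (h t) (pow_nonneg hγ0 t)


lemma weighted_abs_le (P : S → A → PMF S) (pol : S → PMF A) (ρ0 : PMF S)
    {g : S × A → ℝ} {C : ℝ} (hg : ∀ p, |g p| ≤ C) (t : ℕ) :
    |∑ p : S × A, dDist P pol ρ0 t p * g p| ≤ C := by
  calc |∑ p : S × A, dDist P pol ρ0 t p * g p|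
      ≤ ∑ p : S × A, |dDist P pol ρ0 t p * g p| := Finset.abs_sum_le_sum_abs _ _
    _ ≤ ∑ p : S × A, dDist P pol ρ0 t p * C := by
        refine Finset.sum_le_sum fun p _ => ?_
        rw [abs_mul, abs_of_nonneg (dDist_nonneg P pol ρ0 t p)]
        exact mul_le_mul_of_nonneg_left (hg p) (dDist_nonneg P pol ρ0 t p)
    _ = C := by rw [← Finset.sum_mul, dDist_sum_one, one_mul]


lemma Jret_summable (P : S → A → PMF S) (pol : S → PMF A) (ρ0 : PMF S)
    {r : S → A → ℝ} {rmax : ℝ} (hr : ∀ s a, |r s a| ≤ rmax)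
    {γ : ℝ} (hγ0 : 0 ≤ γ) (hγ1 : γ < 1) :
    Summable (fun t => γ ^ t * ∑ p : S × A, dDist P pol ρ0 t p * r p.1 p.2) :=
  bounded_summable hγ0 hγ1 (fun t => weighted_abs_le P pol ρ0 (fun p => hr p.1 p.2) t)


lemma abs_Jret_le (P : S → A → PMF S) (pol : S → PMF A) (ρ0 : PMF S)
    {r : S → A → ℝ} {rmax : ℝ} (hr : ∀ s a, |r s a| ≤ rmax)
    {γ : ℝ} (hγ0 : 0 ≤ γ) (hγ1 : γ < 1) :
    |Jret P pol ρ0 r γ| ≤ rmax / (1 - γ) := by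
  have hsum := Jret_summable P pol ρ0 hr hγ0 hγ1
  have h1 : |Jret P pol ρ0 r γ| ≤
      ∑' t : ℕ, |γ ^ t * ∑ p : S × A, dDist P pol ρ0 t p * r p.1 p.2| := by
    have := norm_tsum_le_tsum_norm
      (f := fun t => γ ^ t * ∑ p : S × A, dDist P pol ρ0 t p * r p.1 p.2)
      (by simp only [Real.norm_eq_abs]; exact hsum.abs)
    simp only [Real.norm_eq_abs] at this; exact this
  refine h1.trans ?_
  have h2 : ∀ t : ℕ, |γ ^ t * ∑ p : S × A, dDist P pol ρ0 t p * r p.1 p.2| ≤ γ ^ t * rmax := by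
    intro t
    rw [abs_mul, abs_pow, abs_of_nonneg hγ0]
    exact mul_le_mul_of_nonneg_left (weighted_abs_le P pol ρ0 (fun p => hr p.1 p.2) t)
      (pow_nonneg hγ0 t)
  calc ∑' t : ℕ, |γ ^ t * ∑ p : S × A, dDist P pol ρ0 t p * r p.1 p.2|
      ≤ ∑' t : ℕ, γ ^ t * rmax := Summable.tsum_le_tsum h2 hsum.abs
        ((summable_geometric_of_lt_one hγ0 hγ1).mul_right rmax)
    _ = rmax / (1 - γ) := by
        rw [tsum_mul_right, tsum_geometric_of_lt_one hγ0 hγ1]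
        rw [div_eq_mul_inv, mul_comm]


lemma abs_Vval_le (P : S → A → PMF S) (pol : S → PMF A)
    {r : S → A → ℝ} {rmax : ℝ} (hr : ∀ s a, |r s a| ≤ rmax)
    {γ : ℝ} (hγ0 : 0 ≤ γ) (hγ1 : γ < 1) (s : S) :
    |Vval P pol r γ s| ≤ rmax / (1 - γ) :=
  abs_Jret_le P pol _ hr hγ0 hγ1


lemma Jret_mix (P : S → A → PMF S) (pol : S → PMF A) (ρ0 : PMF S)
    {r : S → A → ℝ} {rmax : ℝ} (hr : ∀ s a, |r s a| ≤ rmax)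
    {γ : ℝ} (hγ0 : 0 ≤ γ) (hγ1 : γ < 1) :
    Jret P pol ρ0 r γ = ∑ s : S, (ρ0 s).toReal * Vval P pol r γ s := by
  unfold Jret Vval
  calc ∑' t : ℕ, γ ^ t * ∑ p : S × A, dDist P pol ρ0 t p * r p.1 p.2
      = ∑' t : ℕ, ∑ s : S, (ρ0 s).toReal *
          (γ ^ t * ∑ p : S × A, dDist P pol (PMF.pure s) t p * r p.1 p.2) := by
        refine tsum_congr fun t => ?_
        have : ∑ p : S × A, dDist P pol ρ0 t p * r p.1 p.2
            = ∑ s : S, ∑ p : S × A, (ρ0 s).toReal * (dDist P pol (PMF.pure s) t p * r p.1 p.2) := by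
          rw [Finset.sum_comm]
          refine Finset.sum_congr rfl fun p _ => ?_
          rw [dDist_mix P pol ρ0 t p, Finset.sum_mul]
          exact Finset.sum_congr rfl fun s _ => by ring
        rw [this, Finset.mul_sum]
        refine Finset.sum_congr rfl fun s _ => by rw [← Finset.mul_sum]; ring
    _ = ∑ s : S, (ρ0 s).toReal *
          ∑' t : ℕ, γ ^ t * ∑ p : S × A, dDist P pol (PMF.pure s) t p * r p.1 p.2 := by
        rw [Summable.tsum_finsetSum (fun s _ =>
          ((Jret_summable P pol (PMF.pure s) hr hγ0 hγ1).mul_left (ρ0 s).toReal))]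
        exact Finset.sum_congr rfl fun s _ => tsum_mul_left

lemma dDist_pure_succ (P : S → A → PMF S) (pol : S → PMF A) (s : S) (t : ℕ) (p : S × A) :
    dDist P pol (PMF.pure s) (t + 1) p = ∑ a : A, (pol s a).toReal *
      ∑ s' : S, (P s a s').toReal * dDist P pol (PMF.pure s') t p := by
  rw [dDist_succ_mix]
  rw [Finset.sum_eq_single s]
  · simp
  · intro σ _ hσ
    simp [PMF.pure_apply, hσ]
  · simp


lemma csum_pure_succ (P : S → A → PMF S) (pol : S → PMF A) (r : S → A → ℝ) (s : S) (t : ℕ) :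
    ∑ p : S × A, dDist P pol (PMF.pure s) (t + 1) p * r p.1 p.2
      = ∑ a : A, (pol s a).toReal * ∑ s' : S, (P s a s').toReal *
          ∑ p : S × A, dDist P pol (PMF.pure s') t p * r p.1 p.2 := by
  simp only [dDist_pure_succ, Finset.sum_mul]
  rw [Finset.sum_comm]
  refine Finset.sum_congr rfl fun a _ => ?_
  simp only [Finset.sum_mul, Finset.mul_sum]
  rw [Finset.sum_comm]
  exact Finset.sum_congr rfl fun s' _ => Finset.sum_congr rfl fun p _ => by ring


lemma Vval_bellman (P : S → A → PMF S) (pol : S → PMF A)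
    {r : S → A → ℝ} {rmax : ℝ} (hr : ∀ s a, |r s a| ≤ rmax)
    {γ : ℝ} (hγ0 : 0 ≤ γ) (hγ1 : γ < 1) (s : S) :
    Vval P pol r γ s = ∑ a : A, (pol s a).toReal * Qval P pol r γ s a := by
  have hs : ∀ s' : S, Summable (fun t =>
      γ ^ t * ∑ p : S × A, dDist P pol (PMF.pure s') t p * r p.1 p.2) :=
    fun s' => Jret_summable P pol (PMF.pure s') hr hγ0 hγ1
  have h0 : (γ : ℝ) ^ 0 * ∑ p : S × A, dDist P pol (PMF.pure s) 0 p * r p.1 p.2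
      = ∑ a : A, (pol s a).toReal * r s a := by
    simp only [pow_zero, one_mul, dDist]
    rw [Fintype.sum_prod_type]
    rw [Finset.sum_eq_single s]
    · simp
    · intro σ _ hσ
      simp [PMF.pure_apply, hσ]
    · simp
  have hstep : ∀ t : ℕ, γ ^ (t + 1) * ∑ p : S × A, dDist P pol (PMF.pure s) (t+1) p * r p.1 p.2
      = ∑ a : A, ∑ s' : S, (γ * (pol s a).toReal * (P s a s').toReal) *
          (γ ^ t * ∑ p : S × A, dDist P pol (PMF.pure s') t p * r p.1 p.2) := by
    intro t
    rw [csum_pure_succ]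
    rw [pow_succ, Finset.mul_sum]
    refine Finset.sum_congr rfl fun a _ => ?_
    rw [Finset.mul_sum, Finset.mul_sum]
    exact Finset.sum_congr rfl fun s' _ => by ring
  have htail : ∑' t : ℕ, γ ^ (t+1) * ∑ p : S × A, dDist P pol (PMF.pure s) (t+1) p * r p.1 p.2
      = ∑ a : A, ∑ s' : S, (γ * (pol s a).toReal * (P s a s').toReal) * Vval P pol r γ s' := by
    calc ∑' t : ℕ, γ ^ (t+1) * ∑ p : S × A, dDist P pol (PMF.pure s) (t+1) p * r p.1 p.2
        = ∑' t : ℕ, ∑ a : A, ∑ s' : S, (γ * (pol s a).toReal * (P s a s').toReal) *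
            (γ ^ t * ∑ p : S × A, dDist P pol (PMF.pure s') t p * r p.1 p.2) :=
          tsum_congr hstep
      _ = ∑ a : A, ∑' t : ℕ, ∑ s' : S, (γ * (pol s a).toReal * (P s a s').toReal) *
            (γ ^ t * ∑ p : S × A, dDist P pol (PMF.pure s') t p * r p.1 p.2) := by
          refine Summable.tsum_finsetSum fun a _ => summable_sum fun s' _ => ?_
          exact (hs s').mul_left _
      _ = ∑ a : A, ∑ s' : S, (γ * (pol s a).toReal * (P s a s').toReal) * Vval P pol r γ s' := by
          refine Finset.sum_congr rfl fun a _ => ?_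
          rw [Summable.tsum_finsetSum fun s' _ => (hs s').mul_left _]
          exact Finset.sum_congr rfl fun s' _ => tsum_mul_left
  calc Vval P pol r γ s
      = ∑' t : ℕ, γ ^ t * ∑ p : S × A, dDist P pol (PMF.pure s) t p * r p.1 p.2 := rfl
    _ = (γ ^ 0 * ∑ p : S × A, dDist P pol (PMF.pure s) 0 p * r p.1 p.2)
        + ∑' t : ℕ, γ ^ (t+1) * ∑ p : S × A, dDist P pol (PMF.pure s) (t+1) p * r p.1 p.2 :=
        Summable.tsum_eq_zero_add (hs s)
    _ = ∑ a : A, (pol s a).toReal * r s a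
        + ∑ a : A, ∑ s' : S, (γ * (pol s a).toReal * (P s a s').toReal) * Vval P pol r γ s' := by
        rw [h0, htail]
    _ = ∑ a : A, (pol s a).toReal * Qval P pol r γ s a := by
        rw [← Finset.sum_add_distrib]
        refine Finset.sum_congr rfl fun a _ => ?_
        unfold Qval
        rw [mul_add]
        congr 1
        rw [Finset.mul_sum, Finset.mul_sum]
        exact Finset.sum_congr rfl fun s' _ => by ring

lemma sim_lemma (Psrc Ptar : S → A → PMF S) (pol : S → PMF A) (ρ0 : PMF S)
    {r : S → A → ℝ} {rmax : ℝ} (hrmax : 0 ≤ rmax) (hr : ∀ s a, |r s a| ≤ rmax)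
    {γ : ℝ} (hγ0 : 0 ≤ γ) (hγ1 : γ < 1) :
    Jret Ptar pol ρ0 r γ = Jret Psrc pol ρ0 r γ +
      γ * ∑ p : S × A, (∑' t : ℕ, γ ^ t * dDist Psrc pol ρ0 t p) *
        (∑ s' : S, ((Ptar p.1 p.2 s').toReal - (Psrc p.1 p.2 s').toReal) *
          Vval Ptar pol r γ s') := by
  have hγ' : 0 < 1 - γ := by linarith
  set V : S → ℝ := Vval Ptar pol r γ with hV
  set Q : S → A → ℝ := Qval Ptar pol r γ with hQ
  set δ : S × A → ℝ := fun p => ∑ s' : S, ((Ptar p.1 p.2 s').toReal - (Psrc p.1 p.2 s').toReal) * V s' with hδ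
  set d : ℕ → S × A → ℝ := dDist Psrc pol ρ0 with hd
  set aa : ℕ → ℝ := fun t => ∑ p : S × A, d t p * Q p.1 p.2 with haa
  set cc : ℕ → ℝ := fun t => ∑ p : S × A, d t p * r p.1 p.2 with hcc
  set ee : ℕ → ℝ := fun t => ∑ p : S × A, d t p * δ p with hee
  have hVmax : ∀ s, |V s| ≤ rmax / (1 - γ) := fun s => abs_Vval_le Ptar pol hr hγ0 hγ1 s
  have hVm0 : 0 ≤ rmax / (1 - γ) := div_nonneg hrmax (le_of_lt hγ')
  have hQmax : ∀ s a, |Q s a| ≤ rmax + γ * (rmax / (1 - γ)) := by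
    intro s a
    rw [hQ]
    unfold Qval
    refine (abs_add_le _ _).trans (add_le_add (hr s a) ?_)
    rw [abs_mul, abs_of_nonneg hγ0]
    refine mul_le_mul_of_nonneg_left ?_ hγ0
    calc |∑ s' : S, (Ptar s a s').toReal * Vval Ptar pol r γ s'|
        ≤ ∑ s' : S, |(Ptar s a s').toReal * Vval Ptar pol r γ s'| := Finset.abs_sum_le_sum_abs _ _
      _ ≤ ∑ s' : S, (Ptar s a s').toReal * (rmax / (1 - γ)) := by
          refine Finset.sum_le_sum fun s' _ => ?_
          rw [abs_mul, abs_of_nonneg ENNReal.toReal_nonneg]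
          exact mul_le_mul_of_nonneg_left (hVmax s') ENNReal.toReal_nonneg
      _ = rmax / (1 - γ) := by rw [← Finset.sum_mul, pmf_sum_toReal, one_mul]
  have hδmax : ∀ p : S × A, |δ p| ≤ 2 * (rmax / (1 - γ)) := by
    intro p
    rw [hδ]
    calc |∑ s' : S, ((Ptar p.1 p.2 s').toReal - (Psrc p.1 p.2 s').toReal) * V s'|
        ≤ ∑ s' : S, |((Ptar p.1 p.2 s').toReal - (Psrc p.1 p.2 s').toReal) * V s'| :=
          Finset.abs_sum_le_sum_abs _ _
      _ ≤ ∑ s' : S, ((Ptar p.1 p.2 s').toReal + (Psrc p.1 p.2 s').toReal) * (rmax / (1 - γ)) := by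
          refine Finset.sum_le_sum fun s' _ => ?_
          rw [abs_mul]
          refine mul_le_mul (((abs_sub _ _).trans (by
            rw [abs_of_nonneg ENNReal.toReal_nonneg, abs_of_nonneg ENNReal.toReal_nonneg]))) (hVmax s') (abs_nonneg _)
            (by positivity)
      _ = 2 * (rmax / (1 - γ)) := by
          rw [← Finset.sum_mul, Finset.sum_add_distrib, pmf_sum_toReal, pmf_sum_toReal]
          norm_num
  -- Step recursion: aa t = cc t + γ * ee t + γ * aa (t+1)
  have hrec : ∀ t : ℕ, aa t = cc t + γ * ee t + γ * aa (t + 1) := by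
    intro t
    have hnext : aa (t + 1) = ∑ p : S × A, d t p * ∑ s' : S, (Psrc p.1 p.2 s').toReal * V s' := by
      calc aa (t + 1)
          = ∑ p' : S × A, (∑ p : S × A, d t p * (Psrc p.1 p.2 p'.1).toReal *
              (pol p'.1 p'.2).toReal) * Q p'.1 p'.2 := rfl
        _ = ∑ p : S × A, ∑ p' : S × A, d t p * (Psrc p.1 p.2 p'.1).toReal *
              (pol p'.1 p'.2).toReal * Q p'.1 p'.2 := by
            rw [Finset.sum_comm]
            exact Finset.sum_congr rfl fun p' _ => by rw [Finset.sum_mul]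
        _ = ∑ p : S × A, d t p * ∑ s' : S, (Psrc p.1 p.2 s').toReal * V s' := by
            refine Finset.sum_congr rfl fun p _ => ?_
            rw [Fintype.sum_prod_type, Finset.mul_sum]
            refine Finset.sum_congr rfl fun s' _ => ?_
            rw [hV, Vval_bellman Ptar pol hr hγ0 hγ1 s', Finset.mul_sum, Finset.mul_sum]
            exact Finset.sum_congr rfl fun a' _ => by rw [← hQ]; ring
    rw [hnext, haa, hcc, hee]
    simp only []
    rw [Finset.mul_sum, Finset.mul_sum, ← Finset.sum_add_distrib, ← Finset.sum_add_distrib]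
    refine Finset.sum_congr rfl fun p _ => ?_
    rw [hQ]
    unfold Qval
    rw [hδ]
    have expand : ∑ s' : S, (Ptar p.1 p.2 s').toReal * Vval Ptar pol r γ s'
        = (∑ s' : S, ((Ptar p.1 p.2 s').toReal - (Psrc p.1 p.2 s').toReal) * V s')
          + ∑ s' : S, (Psrc p.1 p.2 s').toReal * V s' := by
      rw [← Finset.sum_add_distrib]
      exact Finset.sum_congr rfl fun s' _ => by rw [hV]; ring
    rw [expand]
    ring
  -- summabilities
  have hccsum : Summable (fun t => γ ^ t * cc t) := Jret_summable Psrc pol ρ0 hr hγ0 hγ1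
  have heesum : Summable (fun t => γ ^ t * ee t) :=
    bounded_summable hγ0 hγ1 (fun t => weighted_abs_le Psrc pol ρ0 hδmax t)
  have heesum' : Summable (fun t => γ ^ (t + 1) * ee t) := by
    have : (fun t => γ ^ (t + 1) * ee t) = fun t => γ * (γ ^ t * ee t) :=
      funext fun t => by ring
    rw [this]
    exact heesum.mul_left γ
  have hfsum : Summable (fun t => γ ^ t * cc t + γ ^ (t + 1) * ee t) := hccsum.add heesum'
  -- γ^N * aa N → 0
  have haabound : ∀ t, |aa t| ≤ rmax + γ * (rmax / (1 - γ)) :=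
    fun t => weighted_abs_le Psrc pol ρ0 (fun p => hQmax p.1 p.2) t
  have hlim : Filter.Tendsto (fun N => γ ^ N * aa N) Filter.atTop (nhds 0) := by
    refine squeeze_zero_norm (a := fun N => (rmax + γ * (rmax / (1 - γ))) * γ ^ N) (fun N => ?_) ?_
    · show ‖γ ^ N * aa N‖ ≤ (rmax + γ * (rmax / (1 - γ))) * γ ^ N
      rw [norm_mul, norm_pow, Real.norm_eq_abs, Real.norm_eq_abs, abs_of_nonneg hγ0, mul_comm]
      exact mul_le_mul_of_nonneg_right (haabound N) (pow_nonneg hγ0 N)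
    · have := (tendsto_pow_atTop_nhds_zero_of_lt_one hγ0 hγ1).const_mul
        (rmax + γ * (rmax / (1 - γ)))
      simpa using this
  -- telescoping
  have hpartial : ∀ N : ℕ, ∑ t ∈ Finset.range N, (γ ^ t * cc t + γ ^ (t + 1) * ee t)
      = aa 0 - γ ^ N * aa N := by
    intro N
    have : ∀ t : ℕ, γ ^ t * cc t + γ ^ (t + 1) * ee t
        = (fun k => γ ^ k * aa k) t - (fun k => γ ^ k * aa k) (t + 1) := by
      intro t
      simp only []
      rw [hrec t]
      ring
    rw [Finset.sum_congr rfl fun t _ => this t, Finset.sum_range_sub' (fun k => γ ^ k * aa k) N]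
    simp
  have hsum_eq : ∑' t : ℕ, (γ ^ t * cc t + γ ^ (t + 1) * ee t) = aa 0 := by
    have h1 : Filter.Tendsto (fun N => ∑ t ∈ Finset.range N, (γ ^ t * cc t + γ ^ (t + 1) * ee t))
        Filter.atTop (nhds (∑' t : ℕ, (γ ^ t * cc t + γ ^ (t + 1) * ee t))) :=
      hfsum.hasSum.tendsto_sum_nat
    have h2 : Filter.Tendsto (fun N => aa 0 - γ ^ N * aa N) Filter.atTop (nhds (aa 0)) := by
      have := (tendsto_const_nhds (x := aa 0) (f := Filter.atTop (α := ℕ))).sub hlim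
      simpa using this
    rw [funext hpartial] at h1
    exact tendsto_nhds_unique h1 h2
  -- aa 0 = Jret Ptar
  have ha0 : aa 0 = Jret Ptar pol ρ0 r γ := by
    rw [Jret_mix Ptar pol ρ0 hr hγ0 hγ1]
    calc aa 0 = ∑ p : S × A, (ρ0 p.1).toReal * (pol p.1 p.2).toReal * Q p.1 p.2 := rfl
      _ = ∑ s : S, (ρ0 s).toReal * Vval Ptar pol r γ s := by
          rw [Fintype.sum_prod_type]
          refine Finset.sum_congr rfl fun s _ => ?_
          rw [Vval_bellman Ptar pol hr hγ0 hγ1 s, Finset.mul_sum]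
          exact Finset.sum_congr rfl fun a _ => by rw [← hQ]; ring
  -- split the tsum
  have hsplit : ∑' t : ℕ, (γ ^ t * cc t + γ ^ (t + 1) * ee t)
      = Jret Psrc pol ρ0 r γ + γ * ∑' t : ℕ, γ ^ t * ee t := by
    rw [Summable.tsum_add hccsum heesum']
    congr 1
    have : (fun t => γ ^ (t + 1) * ee t) = fun t => γ * (γ ^ t * ee t) :=
      funext fun t => by ring
    rw [this, tsum_mul_left]
  -- rewrite tsum of ee as a finite sum over p
  have hdle1 : ∀ (t : ℕ) (p : S × A), d t p ≤ 1 := by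
    intro t p
    rw [← dDist_sum_one Psrc pol ρ0 t]
    exact Finset.single_le_sum (f := fun q => d t q)
      (fun q _ => dDist_nonneg Psrc pol ρ0 t q) (Finset.mem_univ p)
  have hdsummable : ∀ p : S × A, Summable (fun t => γ ^ t * (d t p * δ p)) := by
    intro p
    refine bounded_summable hγ0 hγ1 (C := 2 * (rmax / (1 - γ))) fun t => ?_
    rw [abs_mul, abs_of_nonneg (dDist_nonneg Psrc pol ρ0 t p)]
    calc d t p * |δ p| ≤ 1 * (2 * (rmax / (1 - γ))) :=
          mul_le_mul (hdle1 t p) (hδmax p) (abs_nonneg _) zero_le_one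
      _ = 2 * (rmax / (1 - γ)) := one_mul _
  have hee_tsum : ∑' t : ℕ, γ ^ t * ee t
      = ∑ p : S × A, (∑' t : ℕ, γ ^ t * d t p) * δ p := by
    calc ∑' t : ℕ, γ ^ t * ee t
        = ∑' t : ℕ, ∑ p : S × A, γ ^ t * (d t p * δ p) := by
          refine tsum_congr fun t => ?_
          rw [hee]
          simp only []
          rw [Finset.mul_sum]
      _ = ∑ p : S × A, ∑' t : ℕ, γ ^ t * (d t p * δ p) := Summable.tsum_finsetSum fun p _ => hdsummable p
      _ = ∑ p : S × A, (∑' t : ℕ, γ ^ t * d t p) * δ p := by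
          refine Finset.sum_congr rfl fun p _ => ?_
          rw [← tsum_mul_right]
          exact tsum_congr fun t => by ring
  rw [← ha0, ← hsum_eq, hsplit, hee_tsum]

end AuxMDP

section AuxPinsker

lemma scalar_ineq : ∀ t : ℝ, 0 ≤ t → (3/2) * (t-1)^2 / (t+2) ≤ t * Real.log t - t + 1 := by
  set F : ℝ → ℝ := fun t => t * Real.log t - t + 1 - (3/2) * (t-1)^2 / (t+2) with hF
  set H : ℝ → ℝ := fun t => Real.log t - (3/2) * ((t-1)*(t+5)) / (t+2)^2 with hH
  have hderivF : ∀ x : ℝ, 0 < x → HasDerivAt F (H x) x := by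
    intro x hx
    have h2 : (x + 2) ≠ 0 := by linarith
    have d1 : HasDerivAt (fun t : ℝ => t * Real.log t) (Real.log x + 1) x :=
      Real.hasDerivAt_mul_log (ne_of_gt hx)
    have d2 : HasDerivAt (fun t : ℝ => (3/2) * (t-1)^2 / (t+2))
        (((3/2) * (2*(x-1)) * (x+2) - (3/2)*(x-1)^2 * 1) / (x+2)^2) x := by
      have dn : HasDerivAt (fun t : ℝ => (3/2) * (t-1)^2) ((3/2) * (2*(x-1))) x := by
        have : HasDerivAt (fun t : ℝ => (t-1)^2) (2*(x-1)) x := by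
          simpa using ((hasDerivAt_id x).sub_const 1).fun_pow 2
        simpa [mul_comm, mul_assoc, mul_left_comm] using this.const_mul (3/2 : ℝ)
      have dd : HasDerivAt (fun t : ℝ => t + 2) 1 x := (hasDerivAt_id x).add_const 2
      exact dn.div dd h2
    have := (d1.fun_sub (hasDerivAt_id x)).add_const 1 |>.fun_sub d2
    refine this.congr_deriv ?_
    rw [hH]
    field_simp
    ring
  have hderivH : ∀ x : ℝ, 0 < x → HasDerivAt H ((x-1)^2*(x+8)/(x*(x+2)^3)) x := by
    intro x hx
    have h2 : (x + 2) ≠ 0 := by linarith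
    have h2' : ((x + 2)^2) ≠ 0 := pow_ne_zero 2 h2
    have d1 : HasDerivAt Real.log (x⁻¹) x := Real.hasDerivAt_log (ne_of_gt hx)
    have dn : HasDerivAt (fun t : ℝ => (3/2) * ((t-1)*(t+5))) ((3/2) * ((x+5) + (x-1))) x := by
      have : HasDerivAt (fun t : ℝ => (t-1)*(t+5)) (1*(x+5) + (x-1)*1) x :=
        ((hasDerivAt_id x).sub_const 1).mul ((hasDerivAt_id x).add_const 5)
      simpa [mul_comm, mul_assoc, mul_left_comm, one_mul, mul_one] using this.const_mul (3/2 : ℝ)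
    have dd : HasDerivAt (fun t : ℝ => (t+2)^2) (2*(x+2)) x := by
      simpa using ((hasDerivAt_id x).add_const 2).fun_pow 2
    have d2 := dn.div dd h2'
    have := d1.fun_sub d2
    refine this.congr_deriv ?_
    have hx' : x ≠ 0 := ne_of_gt hx
    field_simp
    ring
  have hHmono : MonotoneOn H (Set.Ioi (0:ℝ)) := by
    refine monotoneOn_of_deriv_nonneg (convex_Ioi 0) ?_ ?_ ?_
    · intro x hx
      exact (hderivH x hx).continuousAt.continuousWithinAt
    · rw [interior_Ioi]
      intro x hx
      exact (hderivH x hx).differentiableAt.differentiableWithinAt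
    · rw [interior_Ioi]
      intro x hx
      rw [(hderivH x hx).deriv]
      have hx' : (0:ℝ) < x := hx
      positivity
  have hH1 : H 1 = 0 := by simp [hH]
  have hF1 : F 1 = 0 := by simp [hF]
  have key : ∀ t : ℝ, 0 < t → 0 ≤ F t := by
    intro t ht
    rcases le_or_gt 1 t with h1 | h1
    · have hmono : MonotoneOn F (Set.Ici (1:ℝ)) := by
        refine monotoneOn_of_deriv_nonneg (convex_Ici 1) ?_ ?_ ?_
        · intro x hx
          have : (0:ℝ) < x := lt_of_lt_of_le one_pos hx
          exact (hderivF x this).continuousAt.continuousWithinAt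
        · rw [interior_Ici]
          intro x hx
          have : (0:ℝ) < x := lt_trans one_pos hx
          exact (hderivF x this).differentiableAt.differentiableWithinAt
        · rw [interior_Ici]
          intro x hx
          have hx0 : (0:ℝ) < x := lt_trans one_pos hx
          rw [(hderivF x hx0).deriv]
          rw [← hH1]
          exact hHmono (Set.mem_Ioi.mpr one_pos) (Set.mem_Ioi.mpr hx0) (le_of_lt hx)
      have := hmono (Set.mem_Ici.mpr le_rfl) (Set.mem_Ici.mpr h1) h1
      rwa [hF1] at this
    · have hanti : AntitoneOn F (Set.Icc t 1) := by
        refine antitoneOn_of_deriv_nonpos (convex_Icc t 1) ?_ ?_ ?_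
        · intro x hx
          have : (0:ℝ) < x := lt_of_lt_of_le ht hx.1
          exact (hderivF x this).continuousAt.continuousWithinAt
        · rw [interior_Icc]
          intro x hx
          have : (0:ℝ) < x := lt_trans ht hx.1
          exact (hderivF x this).differentiableAt.differentiableWithinAt
        · rw [interior_Icc]
          intro x hx
          have hx0 : (0:ℝ) < x := lt_trans ht hx.1
          rw [(hderivF x hx0).deriv]
          rw [← hH1]
          exact hHmono (Set.mem_Ioi.mpr hx0) (Set.mem_Ioi.mpr one_pos) (le_of_lt hx.2)
      have := hanti (Set.mem_Icc.mpr ⟨le_rfl, le_of_lt h1⟩)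
        (Set.mem_Icc.mpr ⟨le_of_lt h1, le_rfl⟩) (le_of_lt h1)
      rwa [hF1] at this
  intro t ht
  rcases eq_or_lt_of_le ht with h0 | h0
  · rw [← h0]
    norm_num
  · have := key t h0
    rw [hF] at this
    simp only [] at this
    linarith

lemma pointwise_kl {p q : ℝ} (hp : 0 ≤ p) (hq : 0 < q) :
    (3/2) * (p - q)^2 / (p + 2*q) ≤ p * Real.log (p / q) - p + q := by
  have h := scalar_ineq (p/q) (div_nonneg hp hq.le)
  have h2 := mul_le_mul_of_nonneg_left h hq.le
  have hq' : q ≠ 0 := ne_of_gt hq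
  have hpq : p + 2*q > 0 := by linarith
  have hpq' : p + 2*q ≠ 0 := ne_of_gt hpq
  have hd : p/q + 2 ≠ 0 := by positivity
  have e1 : q * ((3/2) * (p/q - 1)^2 / (p/q + 2)) = (3/2) * (p - q)^2 / (p + 2*q) := by
    field_simp
    try ring
  have e2 : q * (p/q * Real.log (p/q) - p/q + 1) = p * Real.log (p/q) - p + q := by
    field_simp
    try ring
  rw [e1, e2] at h2
  exact h2

lemma pinsker {X : Type*} [Fintype X] (p q : PMF X) (hq : ∀ x, 0 < (q x).toReal) :
    ∑ x : X, |(p x).toReal - (q x).toReal| ≤ Real.sqrt 2 * Real.sqrt (dKL p q) := by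
  set P : X → ℝ := fun x => (p x).toReal with hP
  set Q : X → ℝ := fun x => (q x).toReal with hQ
  have hP0 : ∀ x, 0 ≤ P x := fun x => ENNReal.toReal_nonneg
  have hPQ : ∀ x, 0 < P x + 2 * Q x := fun x => by have := hq x; have := hP0 x; positivity
  -- KL lower bound
  have hkl : (3/2) * ∑ x : X, (P x - Q x)^2 / (P x + 2 * Q x) ≤ dKL p q := by
    have h1 : ∀ x : X, (3/2) * (P x - Q x)^2 / (P x + 2 * Q x)
        ≤ P x * Real.log (P x / Q x) - P x + Q x := fun x => pointwise_kl (hP0 x) (hq x)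
    have h2 : ∑ x : X, ((3/2) * (P x - Q x)^2 / (P x + 2 * Q x))
        ≤ ∑ x : X, (P x * Real.log (P x / Q x) - P x + Q x) :=
      Finset.sum_le_sum fun x _ => h1 x
    calc (3/2) * ∑ x : X, (P x - Q x)^2 / (P x + 2 * Q x)
        = ∑ x : X, (3/2) * (P x - Q x)^2 / (P x + 2 * Q x) := by
          rw [Finset.mul_sum]
          exact Finset.sum_congr rfl fun x _ => by ring
      _ ≤ ∑ x : X, (P x * Real.log (P x / Q x) - P x + Q x) := h2
      _ = dKL p q := by
          unfold dKL
          rw [Finset.sum_add_distrib, Finset.sum_sub_distrib]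
          rw [show ∑ x : X, P x = 1 from pmf_sum_toReal p,
            show ∑ x : X, Q x = 1 from pmf_sum_toReal q]
          ring
  -- Cauchy-Schwarz
  have hcs : (∑ x : X, |P x - Q x|) ^ 2
      ≤ (∑ x : X, (P x - Q x)^2 / (P x + 2 * Q x)) * 3 := by
    have h := Finset.sum_mul_sq_le_sq_mul_sq Finset.univ
      (fun x => |P x - Q x| / Real.sqrt (P x + 2 * Q x))
      (fun x => Real.sqrt (P x + 2 * Q x))
    have e1 : ∀ x : X, |P x - Q x| / Real.sqrt (P x + 2 * Q x) * Real.sqrt (P x + 2 * Q x)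
        = |P x - Q x| := fun x =>
      div_mul_cancel₀ _ (ne_of_gt (Real.sqrt_pos.mpr (hPQ x)))
    have e2 : ∀ x : X, (|P x - Q x| / Real.sqrt (P x + 2 * Q x)) ^ 2
        = (P x - Q x)^2 / (P x + 2 * Q x) := fun x => by
      rw [div_pow, sq_abs, Real.sq_sqrt (le_of_lt (hPQ x))]
    have e3 : ∀ x : X, (Real.sqrt (P x + 2 * Q x)) ^ 2 = P x + 2 * Q x := fun x =>
      Real.sq_sqrt (le_of_lt (hPQ x))
    rw [Finset.sum_congr rfl fun x _ => e1 x, Finset.sum_congr rfl fun x _ => e2 x,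
      Finset.sum_congr rfl fun x _ => e3 x] at h
    have e4 : ∑ x : X, (P x + 2 * Q x) = 3 := by
      rw [Finset.sum_add_distrib, show ∑ x : X, P x = 1 from pmf_sum_toReal p]
      have : ∑ x : X, 2 * Q x = 2 * ∑ x : X, Q x := by rw [Finset.mul_sum]
      rw [this, show ∑ x : X, Q x = 1 from pmf_sum_toReal q]
      norm_num
    rwa [e4] at h
  have hfin : (∑ x : X, |P x - Q x|) ^ 2 ≤ 2 * dKL p q := by
    calc (∑ x : X, |P x - Q x|) ^ 2
        ≤ (∑ x : X, (P x - Q x)^2 / (P x + 2 * Q x)) * 3 := hcs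
      _ ≤ 2 * dKL p q := by nlinarith [hkl]
  have habs : 0 ≤ ∑ x : X, |P x - Q x| := Finset.sum_nonneg fun x _ => abs_nonneg _
  calc ∑ x : X, |P x - Q x|
      = Real.sqrt ((∑ x : X, |P x - Q x|) ^ 2) := (Real.sqrt_sq habs).symm
    _ ≤ Real.sqrt (2 * dKL p q) := Real.sqrt_le_sqrt hfin
    _ = Real.sqrt 2 * Real.sqrt (dKL p q) := Real.sqrt_mul (by norm_num) _

end AuxPinsker

/-- online performance bound in dynamics-KL form, Theorem 3 via the
representation–dynamics equivalence: for kernels `P_src, P_tar` with `P_tar` everywhere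
positive and any policy `pol`,
`J[P_tar](pol) − J[P_src](pol) ≥ −(√2·γ·r_max/(1−γ)²) Σ_{(s,a)} ρ[P_src,pol](s,a)·√(D_KL(P_src(s,a)‖P_tar(s,a)))`. -/
theorem online_performance_bound_kl
    {S A : Type*} [Fintype S] [Fintype A] [Nonempty S] [Nonempty A]
    (Psrc Ptar : S → A → PMF S) (hpos : ∀ s a s', 0 < Ptar s a s')
    (pol : S → PMF A) (ρ0 : PMF S)
    (r : S → A → ℝ) (rmax : ℝ) (hrmax : 0 ≤ rmax) (hr : ∀ s a, |r s a| ≤ rmax)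
    (γ : ℝ) (hγ0 : 0 ≤ γ) (hγ1 : γ < 1) :
    Jret Ptar pol ρ0 r γ - Jret Psrc pol ρ0 r γ ≥
      -(Real.sqrt 2 * γ * rmax / (1 - γ) ^ 2) *
        ∑ p : S × A, occ Psrc pol ρ0 γ p *
          Real.sqrt (dKL (Psrc p.1 p.2) (Ptar p.1 p.2)) := by
  have hγ' : 0 < 1 - γ := by linarith
  have hγ'' : (1 - γ) ≠ 0 := ne_of_gt hγ'
  have hqpos : ∀ (s : S) (a : A) (s' : S), 0 < (Ptar s a s').toReal := fun s a s' =>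
    ENNReal.toReal_pos (ne_of_gt (hpos s a s')) (PMF.apply_ne_top _ _)
  set V : S → ℝ := Vval Ptar pol r γ with hV
  set w : S × A → ℝ := fun p => ∑' t : ℕ, γ ^ t * dDist Psrc pol ρ0 t p with hw
  set δ : S × A → ℝ := fun p => ∑ s' : S,
    ((Ptar p.1 p.2 s').toReal - (Psrc p.1 p.2 s').toReal) * V s' with hδ
  have hsim := sim_lemma Psrc Ptar pol ρ0 hrmax hr hγ0 hγ1
  have hVmax : ∀ s, |V s| ≤ rmax / (1 - γ) := fun s => abs_Vval_le Ptar pol hr hγ0 hγ1 s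
  have hδlb : ∀ p : S × A,
      -(Real.sqrt 2 * Real.sqrt (dKL (Psrc p.1 p.2) (Ptar p.1 p.2)) * (rmax / (1 - γ))) ≤ δ p := by
    intro p
    have habs : |δ p| ≤
        Real.sqrt 2 * Real.sqrt (dKL (Psrc p.1 p.2) (Ptar p.1 p.2)) * (rmax / (1 - γ)) := by
      calc |δ p|
          ≤ ∑ s' : S, |((Ptar p.1 p.2 s').toReal - (Psrc p.1 p.2 s').toReal) * V s'| := by
            rw [hδ]; exact Finset.abs_sum_le_sum_abs _ _
        _ ≤ ∑ s' : S, |(Psrc p.1 p.2 s').toReal - (Ptar p.1 p.2 s').toReal| * (rmax / (1 - γ)) := by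
            refine Finset.sum_le_sum fun s' _ => ?_
            rw [abs_mul, abs_sub_comm]
            exact mul_le_mul_of_nonneg_left (hVmax s') (abs_nonneg _)
        _ = (∑ s' : S, |(Psrc p.1 p.2 s').toReal - (Ptar p.1 p.2 s').toReal|) * (rmax / (1 - γ)) := by
            rw [Finset.sum_mul]
        _ ≤ Real.sqrt 2 * Real.sqrt (dKL (Psrc p.1 p.2) (Ptar p.1 p.2)) * (rmax / (1 - γ)) := by
            refine mul_le_mul_of_nonneg_right ?_ (div_nonneg hrmax hγ'.le)
            exact pinsker (Psrc p.1 p.2) (Ptar p.1 p.2) (fun x => hqpos p.1 p.2 x)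
    have := neg_abs_le (δ p)
    linarith
  have hw0 : ∀ p : S × A, 0 ≤ w p := fun p =>
    tsum_nonneg fun t => mul_nonneg (pow_nonneg hγ0 t) (dDist_nonneg Psrc pol ρ0 t p)
  have hsum_lb : ∑ p : S × A, w p *
      (-(Real.sqrt 2 * Real.sqrt (dKL (Psrc p.1 p.2) (Ptar p.1 p.2)) * (rmax / (1 - γ))))
      ≤ ∑ p : S × A, w p * δ p :=
    Finset.sum_le_sum fun p _ => mul_le_mul_of_nonneg_left (hδlb p) (hw0 p)
  have hocc : ∀ p : S × A, occ Psrc pol ρ0 γ p = (1 - γ) * w p := fun p => rfl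
  rw [ge_iff_le, hsim]
  have hsimp : Jret Psrc pol ρ0 r γ + γ * (∑ p : S × A, w p * δ p) - Jret Psrc pol ρ0 r γ
      = γ * ∑ p : S × A, w p * δ p := by ring
  rw [hsimp]
  have e : -(Real.sqrt 2 * γ * rmax / (1 - γ) ^ 2) *
      ∑ p : S × A, occ Psrc pol ρ0 γ p * Real.sqrt (dKL (Psrc p.1 p.2) (Ptar p.1 p.2))
      = γ * ∑ p : S × A, w p *
        (-(Real.sqrt 2 * Real.sqrt (dKL (Psrc p.1 p.2) (Ptar p.1 p.2)) * (rmax / (1 - γ)))) := by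
    simp only [hocc]
    rw [Finset.mul_sum, Finset.mul_sum]
    refine Finset.sum_congr rfl fun p _ => ?_
    field_simp
  rw [e]
  exact mul_le_mul_of_nonneg_left hsum_lb hγ0
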